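/- For the first-touch attribution rule, the user × publisher × advertiser adjacency relation with post-attribution contribution bound enforcement with bound r maps any two adjacent datasets (differing by all impressions of a single (user, publisher, advertiser) triple) to attributed datasets at ℓ1-distance at most 2r. -/

import Mathlib

/-! Framework for differentially private ad conversion measurement
(Delaney et al., "Differentially Private Ad Conversion Measurement"). -/

structure Impression where
  time : ℕ
  user : ℕ
  pub : ℕ
  adv : ℕ
  id : ℕ
deriving DecidableEq

structure Conversion where
  time : ℕ
  user : ℕ
  adv : ℕ
  id : ℕ
deriving DecidableEq

structure Dataset where
  imps : List Impression
  convs : List Conversion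

/-- An attribution rule maps a time-ordered list of impressions and a conversion
to a list of credits (one per impression). -/
abbrev AttrRule := List Impression → Conversion → List ℝ

/-- A valid attribution rule outputs one nonnegative weight per impression, summing to 1. -/
def ValidRule (a : AttrRule) : Prop :=
  ∀ is c, is ≠ [] →
    (a is c).length = is.length ∧ (a is c).sum = 1 ∧ ∀ w ∈ a is c, (0 : ℝ) ≤ w

/-- Impressions eligible for attribution of conversion `c`: those occurring earlier
with the same user and advertiser. -/
def eligible (D : Dataset) (c : Conversion) : List Impression :=
  D.imps.filter fun i => decide (i.time < c.time ∧ i.user = c.user ∧ i.adv = c.adv)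

/-- ℓ₁ distance between attributed datasets. -/
noncomputable def l1dist (w w' : (Impression × Conversion) →₀ ℝ) : ℝ :=
  (w - w').sum fun _ v => |v|

/-- Impressions and conversions are listed in time order. -/
def SortedDS (D : Dataset) : Prop :=
  D.imps.Pairwise (fun i j => i.time ≤ j.time) ∧
  D.convs.Pairwise (fun c c' => c.time ≤ c'.time)

/-- Inner loop of post-attribution contribution-bound enforcement: each weighted
(impression, conversion) pair is kept only if the remaining bound of its scope covers
the weight, in which case the weight is deducted. -/
noncomputable def applyPairs {σ : Type} [DecidableEq σ] (s : Impression → σ) (c : Conversion) :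
    List (Impression × ℝ) → (σ → ℝ) × ((Impression × Conversion) →₀ ℝ) →
      (σ → ℝ) × ((Impression × Conversion) →₀ ℝ)
  | [], st => st
  | (i, w) :: rest, st =>
      if w ≤ st.1 (s i) then
        applyPairs s c rest
          (Function.update st.1 (s i) (st.1 (s i) - w), st.2 + Finsupp.single (i, c) w)
      else
        applyPairs s c rest st

/-- Attribution with post-attribution contribution bound enforcement (Algorithm 1),
with contribution bounding scope map `s` and contribution bound `r`. -/
noncomputable def postAttr {σ : Type} [DecidableEq σ] (a : AttrRule) (s : Impression → σ)
    (r : ℝ) (D : Dataset) : (Impression × Conversion) →₀ ℝ :=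
  (D.convs.foldl
    (fun st c => applyPairs s c ((eligible D c).zip (a (eligible D c) c)) st)
    ((fun _ => r : σ → ℝ), (0 : (Impression × Conversion) →₀ ℝ))).2

/-- Attribution with pre-attribution contribution bound enforcement (Algorithm 2):
for each conversion, every scope with an eligible impression pays one unit of its bound
if available, otherwise its impressions are excluded from attribution. -/
noncomputable def preAttr {σ : Type} [DecidableEq σ] (a : AttrRule) (s : Impression → σ)
    (r : ℝ) (D : Dataset) : (Impression × Conversion) →₀ ℝ :=
  (D.convs.foldl
    (fun (st : (σ → ℝ) × ((Impression × Conversion) →₀ ℝ)) c =>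
      let el := eligible D c
      let surv := el.filter fun i => decide ((1 : ℝ) ≤ st.1 (s i))
      let scopes := (el.map s).dedup
      ((fun x => if x ∈ scopes ∧ (1 : ℝ) ≤ st.1 x then st.1 x - 1 else st.1 x : σ → ℝ),
        st.2 + ((surv.zip (a surv c)).map fun p => Finsupp.single (p.1, c) p.2).sum))
    ((fun _ => r : σ → ℝ), (0 : (Impression × Conversion) →₀ ℝ))).2

/-- Attribution without any contribution bound enforcement. -/
noncomputable def attrNoCap (a : AttrRule) (D : Dataset) :
    (Impression × Conversion) →₀ ℝ :=
  (D.convs.map fun c =>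
    (((eligible D c).zip (a (eligible D c) c)).map fun p => Finsupp.single (p.1, c) p.2).sum).sum

/-- Adjacency: `D'` results from `D` by adding a single impression (in time order). -/
def AddOneImpression (D D' : Dataset) : Prop :=
  ∃ (i0 : Impression) (l₁ l₂ : List Impression),
    D.imps = l₁ ++ l₂ ∧ D'.imps = l₁ ++ i0 :: l₂ ∧ D.convs = D'.convs

/-- Adjacency: `D` results from `D'` by removing all impressions whose scope (under `si`)
is `v` and all conversions whose scope (under `sc`) is `v`. -/
def RemovesScope {σ : Type} [DecidableEq σ] (si : Impression → σ)
    (sc : Conversion → Option σ) (v : σ) (D D' : Dataset) : Prop :=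
  D.imps = D'.imps.filter (fun i => decide (si i ≠ v)) ∧
  D.convs = D'.convs.filter (fun c => decide (sc c ≠ some v))

/-- First-touch attribution. -/
noncomputable def FTA : AttrRule := fun is _ =>
  match is with
  | [] => []
  | _ :: t => 1 :: t.map fun _ => 0

/-- Last-touch attribution. -/
noncomputable def LTA : AttrRule := fun is _ =>
  match is with
  | [] => []
  | _ :: _ => List.replicate (is.length - 1) 0 ++ [1]

/-- Uniform multi-touch attribution. -/
noncomputable def UNI : AttrRule := fun is _ => is.map fun _ => ((is.length : ℝ))⁻¹

/-- U-shaped attribution. -/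
noncomputable def USH : AttrRule := fun is _ =>
  match is with
  | [] => []
  | [_] => [1]
  | [_, _] => [0.5, 0.5]
  | _ :: _ :: _ :: _ =>
      (0.4 : ℝ) :: (List.replicate (is.length - 2) ((0.2 : ℝ) / ((is.length : ℝ) - 2)) ++ [0.4])

/-- Exponential time decay attribution with half-life `th`. -/
noncomputable def EXPR (th : ℝ) : AttrRule := fun is c =>
  let wt : Impression → ℝ := fun i => (2 : ℝ) ^ (-(((c.time : ℝ) - (i.time : ℝ)) / th))
  is.map fun i => wt i / (is.map wt).sum

/-! Under first-touch attribution a conversion credits only its earliest eligible impression,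
so post-attribution enforcement makes it spend one unit of budget of a single scope. Removing
the scope `v = (u, p, a)` only affects the conversions of user `u` for advertiser `a`. If the
first `(u, a)`-impression of `D'` is outside `v`, every conversion credits the same impression
in both datasets; otherwise all those conversions credit scope `v` in `D'` and one fixed scope
`τ` in `D`. Either way the two runs agree on every budget outside `{v, τ}`, and each pair
credited in only one run is paid for by a unit of `τ`'s budget in `D` or of `v`'s in `D'`;
hence the distance is at most `2r`. -/

theorem List.Pairwise.head?_eq_of_mem_head?_filter_lt {α β : Type*} [LinearOrder β] {f : α → β}
    {l : List α} (hl : l.Pairwise fun a b => f a ≤ f b) {T : β} {x : α}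
    (hx : x ∈ (l.filter fun a => f a < T).head?) : l.head? = some x := by
  cases l with
  | nil => simp at hx
  | cons y t =>
    by_cases hy : f y < T
    · simpa [List.filter_cons, hy, eq_comm] using hx
    · have hnil : (t.filter fun a => f a < T) = [] := by
        refine List.filter_eq_nil_iff.mpr fun z hz => ?_
        have := (List.pairwise_cons.mp hl).1 z hz
        simp only [decide_eq_true_eq, not_lt]
        exact (not_lt.mp hy).trans this
      simp [hy, hnil] at hx

theorem List.head?_filter_of_forall_mem_head? {α : Type*} {p : α → Bool} {l : List α}
    (h : ∀ x ∈ l.head?, p x) : (l.filter p).head? = l.head? := by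
  cases l with
  | nil => rfl
  | cons y t => simp [h y rfl]

theorem Finsupp.sum_abs_add_le {α : Type*} (f g : α →₀ ℝ) :
    (f + g).sum (fun _ x => |x|) ≤ f.sum (fun _ x => |x|) + g.sum (fun _ x => |x|) := by
  classical
  have hsum {h : α →₀ ℝ} (hh : h.support ⊆ f.support ∪ g.support) :=
    h.sum_of_support_subset hh (fun _ x => |x|) (fun _ _ => abs_zero)
  rw [hsum Finsupp.support_add, hsum Finset.subset_union_left, hsum Finset.subset_union_right,
    ← Finset.sum_add_distrib]
  exact Finset.sum_le_sum fun x _ => abs_add_le (f x) (g x)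

theorem l1dist_comm (w w' : (Impression × Conversion) →₀ ℝ) : l1dist w w' = l1dist w' w := by
  rw [l1dist, l1dist, ← neg_sub, Finsupp.sum_neg_index fun _ => abs_zero]
  simp only [abs_neg]

theorem l1dist_add_single_le (w w' : (Impression × Conversion) →₀ ℝ) (p : Impression × Conversion)
    (a : ℝ) : l1dist (w + Finsupp.single p a) w' ≤ l1dist w w' + |a| := by
  have hsingle : (Finsupp.single p a).sum (fun _ x => |x|) = |a| :=
    Finsupp.sum_single_index abs_zero
  rw [l1dist, l1dist, add_sub_right_comm, ← hsingle]
  exact Finsupp.sum_abs_add_le _ _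

theorem l1dist_add_add_right (w w' z : (Impression × Conversion) →₀ ℝ) :
    l1dist (w + z) (w' + z) = l1dist w w' := by
  rw [l1dist, l1dist, add_sub_add_right_eq_sub]

section FirstTouchStep

variable {σ : Type} [DecidableEq σ] (s : Impression → σ)

abbrev BudgetState (σ : Type) := (σ → ℝ) × ((Impression × Conversion) →₀ ℝ)

noncomputable def firstTouchStep (c : Conversion) :
    Option Impression → BudgetState σ → BudgetState σ
  | none, st => st
  | some i, st =>
      if 1 ≤ st.1 (s i) then
        (Function.update st.1 (s i) (st.1 (s i) - 1), st.2 + Finsupp.single (i, c) 1)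
      else st

theorem applyPairs_zip_map_zero (c : Conversion) (l : List Impression) (st : BudgetState σ) :
    applyPairs s c (l.zip (l.map fun _ => (0 : ℝ))) st = st := by
  induction l with
  | nil => rfl
  | cons i t ih =>
    simp only [List.map_cons, List.zip_cons_cons, applyPairs, sub_zero, Function.update_eq_self,
      Finsupp.single_zero, add_zero, ite_self, ih]

theorem applyPairs_zip_FTA (c : Conversion) (l : List Impression) (st : BudgetState σ) :
    applyPairs s c (l.zip (FTA l c)) st = firstTouchStep s c l.head? st := by
  cases l with
  | nil => rfl
  | cons i t =>
    simp only [FTA, List.zip_cons_cons, applyPairs, applyPairs_zip_map_zero, List.head?_cons,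
      firstTouchStep]

theorem postAttr_FTA (r : ℝ) (D : Dataset) :
    postAttr FTA s r D =
      (D.convs.foldl (fun st c => firstTouchStep s c (eligible D c).head? st)
        ((fun _ => r), 0)).2 := by
  simp only [postAttr, applyPairs_zip_FTA]

variable {s}

theorem firstTouchStep_budget_nonneg (c : Conversion) (o : Option Impression)
    {st : BudgetState σ} (hst : ∀ x, 0 ≤ st.1 x) (x : σ) :
    0 ≤ (firstTouchStep s c o st).1 x := by
  cases o with
  | none => exact hst x
  | some i =>
    rw [firstTouchStep]
    split_ifs with hb
    · rcases eq_or_ne x (s i) with rfl | hx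
      · simpa using hb
      · simpa [Function.update_of_ne hx] using hst x
    · exact hst x

theorem firstTouchStep_budget_of_ne (c : Conversion) {o : Option Impression} {x : σ}
    (hx : ∀ i ∈ o, s i ≠ x) (st : BudgetState σ) :
    (firstTouchStep s c o st).1 x = st.1 x := by
  cases o with
  | none => rfl
  | some i =>
    rw [firstTouchStep]
    split_ifs
    · exact Function.update_of_ne (hx i rfl).symm _ _
    · rfl

theorem l1dist_firstTouchStep_le (c : Conversion) {o : Option Impression} {w : σ}
    (hw : ∀ i ∈ o, s i = w) (st : BudgetState σ) (g : (Impression × Conversion) →₀ ℝ) :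
    l1dist (firstTouchStep s c o st).2 g ≤
      l1dist st.2 g + (st.1 w - (firstTouchStep s c o st).1 w) := by
  cases o with
  | none => simp [firstTouchStep]
  | some i =>
    obtain rfl := hw i rfl
    rw [firstTouchStep]
    split_ifs
    · simpa using l1dist_add_single_le st.2 g (i, c) 1
    · simp

theorem firstTouchStep_eqOn (c : Conversion) {o : Option Impression} {S : Set σ}
    (hS : ∀ i ∈ o, s i ∈ S) {st st' : BudgetState σ} (h : Set.EqOn st.1 st'.1 S) :
    Set.EqOn (firstTouchStep s c o st).1 (firstTouchStep s c o st').1 S := by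
  cases o with
  | none => exact h
  | some i =>
    have hi := h (hS i rfl)
    intro x hx
    simp only [firstTouchStep, hi]
    split_ifs
    · rcases eq_or_ne x (s i) with rfl | hne
      · simp
      · simp [Function.update_of_ne hne, h hx]
    · exact h hx

theorem l1dist_firstTouchStep_firstTouchStep (c : Conversion) {o : Option Impression}
    {st st' : BudgetState σ} (h : ∀ i ∈ o, st.1 (s i) = st'.1 (s i)) :
    l1dist (firstTouchStep s c o st).2 (firstTouchStep s c o st').2 = l1dist st.2 st'.2 := by
  cases o with
  | none => rfl
  | some i =>
    simp only [firstTouchStep, h i rfl]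
    split_ifs
    · exact l1dist_add_add_right _ _ _
    · rfl

end FirstTouchStep

section Coupling

variable {σ : Type}

def CompatibleChoices (s : Impression → σ) (v τ : σ) (o o' : Option Impression) : Prop :=
  (o = o' ∧ ∀ i ∈ o, s i ∈ ({v, τ}ᶜ : Set σ)) ∨ ((∀ i ∈ o, s i = τ) ∧ ∀ i ∈ o', s i = v)

def CoupledRuns (v τ : σ) (r : ℝ) (st st' : BudgetState σ) : Prop :=
  Set.EqOn st.1 st'.1 {v, τ}ᶜ ∧ (∀ x, 0 ≤ st.1 x) ∧ (∀ x, 0 ≤ st'.1 x) ∧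
    l1dist st.2 st'.2 ≤ (r - st.1 τ) + (r - st'.1 v)

variable {s : Impression → σ} {v τ : σ} {r : ℝ}

theorem coupledRuns_init (hr : 0 ≤ r) :
    CoupledRuns v τ r ((fun _ => r), 0) ((fun _ => r), 0) :=
  ⟨Set.eqOn_refl _ _, fun _ => hr, fun _ => hr, by simp [l1dist]⟩

theorem CoupledRuns.l1dist_le {st st' : BudgetState σ} (h : CoupledRuns v τ r st st') :
    l1dist st.2 st'.2 ≤ 2 * r := by
  linarith [h.2.1 τ, h.2.2.1 v, h.2.2.2]

variable [DecidableEq σ]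

theorem CoupledRuns.step {st st' : BudgetState σ} (h : CoupledRuns v τ r st st')
    (c : Conversion) {o o' : Option Impression} (hoo' : CompatibleChoices s v τ o o') :
    CoupledRuns v τ r (firstTouchStep s c o st) (firstTouchStep s c o' st') := by
  obtain ⟨heq, hnn, hnn', hdist⟩ := h
  refine ⟨?_, firstTouchStep_budget_nonneg c o hnn, firstTouchStep_budget_nonneg c o' hnn', ?_⟩
  all_goals rcases hoo' with ⟨rfl, hS⟩ | ⟨hτ, hv⟩
  · exact firstTouchStep_eqOn c hS heq
  · intro x hx
    simp only [Set.mem_compl_iff, Set.mem_insert_iff, Set.mem_singleton_iff, not_or] at hx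
    rw [firstTouchStep_budget_of_ne c (fun i hi => (hτ i hi).trans_ne (Ne.symm hx.2)),
      firstTouchStep_budget_of_ne c (fun i hi => (hv i hi).trans_ne (Ne.symm hx.1))]
    exact heq (by simp [hx.1, hx.2])
  · have hτ : ∀ i ∈ o, s i ≠ τ := fun i hi hiτ => hS i hi (by simp [hiτ])
    have hv : ∀ i ∈ o, s i ≠ v := fun i hi hiv => hS i hi (by simp [hiv])
    rw [l1dist_firstTouchStep_firstTouchStep c (fun i hi => heq (hS i hi)),
      firstTouchStep_budget_of_ne c hτ, firstTouchStep_budget_of_ne c hv]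
    exact hdist
  · have h₁ := l1dist_firstTouchStep_le c hτ st (firstTouchStep s c o' st').2
    have h₂ := l1dist_firstTouchStep_le c hv st' st.2
    rw [l1dist_comm, l1dist_comm st'.2] at h₂
    linarith

theorem CoupledRuns.foldl {g g' : Conversion → Option Impression}
    {cs : List Conversion} (hcs : ∀ c ∈ cs, CompatibleChoices s v τ (g c) (g' c))
    {st st' : BudgetState σ} (h : CoupledRuns v τ r st st') :
    CoupledRuns v τ r (cs.foldl (fun st c => firstTouchStep s c (g c) st) st)
      (cs.foldl (fun st c => firstTouchStep s c (g' c) st) st') := by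
  induction cs generalizing st st' with
  | nil => exact h
  | cons c cs ih =>
    exact ih (fun c' hc' => hcs c' (List.mem_cons_of_mem c hc'))
      (h.step c (hcs c List.mem_cons_self))

end Coupling

abbrev upaScope (i : Impression) : ℕ × ℕ × ℕ := (i.user, i.pub, i.adv)

def firstTouchpoint (D : Dataset) (u a : ℕ) : Option Impression :=
  (D.imps.filter fun i => i.user = u ∧ i.adv = a).head?

theorem eligible_eq_filter_filter (D : Dataset) (c : Conversion) :
    eligible D c = (D.imps.filter fun i => i.user = c.user ∧ i.adv = c.adv).filter
      fun i => i.time < c.time := by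
  simp only [eligible, List.filter_filter]
  refine List.filter_congr fun i _ => ?_
  simp only [Bool.decide_and, Bool.and_comm]

section Eligible

variable {D D' : Dataset} {c : Conversion}

theorem firstTouchpoint_eq_of_mem_head?_eligible (hD : D.imps.Pairwise (·.time ≤ ·.time))
    {i : Impression} (hi : i ∈ (eligible D c).head?) :
    firstTouchpoint D c.user c.adv = some i := by
  rw [eligible_eq_filter_filter] at hi
  exact (hD.filter _).head?_eq_of_mem_head?_filter_lt hi

theorem upaScope_ne_of_mem_eligible {i : Impression} (hi : i ∈ eligible D c) {w : ℕ × ℕ × ℕ}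
    (hw : ¬(c.user = w.1 ∧ c.adv = w.2.2)) : upaScope i ≠ w := by
  rintro rfl
  simp only [eligible, List.mem_filter, decide_eq_true_eq] at hi
  exact hw ⟨hi.2.2.1.symm, hi.2.2.2.symm⟩

theorem head?_eligible_of_removesScope {v : ℕ × ℕ × ℕ}
    (hImps : D.imps = D'.imps.filter fun i => upaScope i ≠ v)
    (h : ∀ i ∈ (eligible D' c).head?, upaScope i ≠ v) :
    (eligible D c).head? = (eligible D' c).head? := by
  rw [eligible, hImps, List.filter_comm, ← eligible]
  exact List.head?_filter_of_forall_mem_head? (by simpa using h)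

end Eligible

section Adjacent

variable {D D' : Dataset} {v : ℕ × ℕ × ℕ}

theorem compatibleChoices_of_firstTouchpoint_ne
    (hImps : D.imps = D'.imps.filter fun i => upaScope i ≠ v)
    (hD' : D'.imps.Pairwise (·.time ≤ ·.time))
    (hfirst : ∀ j ∈ firstTouchpoint D' v.1 v.2.2, upaScope j ≠ v) (c : Conversion) :
    CompatibleChoices upaScope v v (eligible D c).head? (eligible D' c).head? := by
  have hne : ∀ i ∈ (eligible D' c).head?, upaScope i ≠ v := by
    intro i hi
    by_cases hc : c.user = v.1 ∧ c.adv = v.2.2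
    · apply hfirst i
      rw [← hc.1, ← hc.2]
      exact firstTouchpoint_eq_of_mem_head?_eligible hD' hi
    · exact upaScope_ne_of_mem_eligible (List.mem_of_mem_head? hi) hc
  have hhead := head?_eligible_of_removesScope hImps hne
  exact .inl ⟨hhead, fun i hi => by simpa using hne i (hhead ▸ hi)⟩

theorem compatibleChoices_of_firstTouchpoint_eq
    (hImps : D.imps = D'.imps.filter fun i => upaScope i ≠ v)
    (hD' : D'.imps.Pairwise (·.time ≤ ·.time))
    (hfirst : ∀ j ∈ firstTouchpoint D' v.1 v.2.2, upaScope j = v) {τ : ℕ × ℕ × ℕ}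
    (hτu : τ.1 = v.1) (hτa : τ.2.2 = v.2.2)
    (hτ : ∀ j ∈ firstTouchpoint D v.1 v.2.2, upaScope j = τ) (c : Conversion) :
    CompatibleChoices upaScope v τ (eligible D c).head? (eligible D' c).head? := by
  have hD : D.imps.Pairwise (·.time ≤ ·.time) := hImps ▸ hD'.filter _
  by_cases hc : c.user = v.1 ∧ c.adv = v.2.2
  · refine .inr ⟨fun i hi => hτ i ?_, fun i hi => hfirst i ?_⟩
    · rw [← hc.1, ← hc.2]
      exact firstTouchpoint_eq_of_mem_head?_eligible hD hi
    · rw [← hc.1, ← hc.2]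
      exact firstTouchpoint_eq_of_mem_head?_eligible hD' hi
  · have hcτ : ¬(c.user = τ.1 ∧ c.adv = τ.2.2) := hτu ▸ hτa ▸ hc
    refine .inl ⟨head?_eligible_of_removesScope hImps
      fun i hi => upaScope_ne_of_mem_eligible (List.mem_of_mem_head? hi) hc, fun i hi => ?_⟩
    have hi' := List.mem_of_mem_head? hi
    simp [upaScope_ne_of_mem_eligible hi' hc, upaScope_ne_of_mem_eligible hi' hcτ]

theorem exists_compatibleChoices (hImps : D.imps = D'.imps.filter fun i => upaScope i ≠ v)
    (hD' : D'.imps.Pairwise (·.time ≤ ·.time)) :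
    ∃ τ, ∀ c, CompatibleChoices upaScope v τ (eligible D c).head? (eligible D' c).head? := by
  by_cases hfirst : ∀ j ∈ firstTouchpoint D' v.1 v.2.2, upaScope j = v
  · obtain ⟨τ, hτu, hτa, hτ⟩ : ∃ τ : ℕ × ℕ × ℕ, τ.1 = v.1 ∧ τ.2.2 = v.2.2 ∧
        ∀ j ∈ firstTouchpoint D v.1 v.2.2, upaScope j = τ := by
      cases h : firstTouchpoint D v.1 v.2.2 with
      | none => exact ⟨v, rfl, rfl, by simp⟩
      | some j =>
        have hj := List.mem_of_mem_head? h
        simp only [List.mem_filter, decide_eq_true_eq] at hj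
        exact ⟨upaScope j, hj.2.1, hj.2.2, by simp⟩
    exact ⟨τ, compatibleChoices_of_firstTouchpoint_eq hImps hD' hfirst hτu hτa hτ⟩
  · refine ⟨v, compatibleChoices_of_firstTouchpoint_ne hImps hD' fun j hj hjv => hfirst ?_⟩
    intro j' hj'
    rwa [Option.mem_unique hj' hj]

end Adjacent

theorem post_attr_upa_fta_valid_general (r : ℕ) (v : ℕ × ℕ × ℕ)
    (D D' : Dataset) (hD' : SortedDS D')
    (hadj : RemovesScope (fun i => (i.user, i.pub, i.adv)) (fun _ => none) v D D') :
    l1dist (postAttr FTA (fun i => (i.user, i.pub, i.adv)) (r : ℝ) D)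
      (postAttr FTA (fun i => (i.user, i.pub, i.adv)) (r : ℝ) D') ≤ 2 * (r : ℝ) := by
  obtain ⟨hImps, hConvs⟩ := hadj
  have hconvs : D.convs = D'.convs := by simpa using hConvs
  obtain ⟨τ, hτ⟩ := exists_compatibleChoices hImps hD'.1
  rw [postAttr_FTA, postAttr_FTA, hconvs]
  exact ((coupledRuns_init (Nat.cast_nonneg r)).foldl fun c _ => hτ c).l1dist_le

/-- Theorem A.10: for first-touch attribution, the user × publisher × advertiser adjacency
relation with post-attribution contribution bound enforcement (bound `r`) yields attributed
datasets at ℓ₁-distance at most `2r`. -/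
theorem post_attr_upa_fta_valid (r : ℕ) (hr : 0 < r) (v : ℕ × ℕ × ℕ)
    (D D' : Dataset) (hD' : SortedDS D')
    (hadj : RemovesScope (fun i => (i.user, i.pub, i.adv)) (fun _ => none) v D D') :
    l1dist (postAttr FTA (fun i => (i.user, i.pub, i.adv)) (r : ℝ) D)
      (postAttr FTA (fun i => (i.user, i.pub, i.adv)) (r : ℝ) D') ≤ 2 * (r : ℝ) :=
  post_attr_upa_fta_valid_general r v D D' hD' hadj
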